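/- For a sequence X : ℕ → Bool, the following are equivalent: (1) there exists a deterministic Büchi automaton M over Bool (on some finite state type) with μ(L(M)) = 0 and X ∈ L(M); (2) X is not disjunctive. -/

import Mathlib

open MeasureTheory Filter

/-- The fair-coin product probability measure on Cantor space `ℕ → Bool`,
constructed as the pushforward of Lebesgue measure on `[0,1)` under binary expansion. -/
noncomputable def mu : Measure (ℕ → Bool) :=
  Measure.map (fun x n => decide (⌊x * 2 ^ (n + 1)⌋ % 2 = 1))
    (volume.restrict (Set.Ico (0 : ℝ) 1))

/-- Action of a word on a state of an automaton. -/
def act {S A : Type*} (f : S → A → S) (s : S) (w : List A) : S := w.foldl f s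

/-- The run of a sequence `X` on the machine `(S, f, s₀)`. -/
def run {S : Type*} (f : S → Bool → S) (s₀ : S) (X : ℕ → Bool) : ℕ → S
  | 0 => s₀
  | n + 1 => f (run f s₀ X n) (X n)

/-- `t` is reachable from `s`. -/
def Reach {S : Type*} (f : S → Bool → S) (s t : S) : Prop := ∃ w : List Bool, act f s w = t

/-- The connected component of a state `s`. -/
def component {S : Type*} (f : S → Bool → S) (s : S) : Set S :=
  {t | Reach f s t ∧ Reach f t s}

/-- `g` is a leaf connected component. -/
def IsLeafComponent {S : Type*} (f : S → Bool → S) (g : Set S) : Prop :=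
  (∃ s, g = component f s) ∧ ∀ s ∈ g, ∀ t, Reach f s t → Reach f t s

/-- The word `w` occurs as a subword of the sequence `X`. -/
def Occurs (w : List Bool) (X : ℕ → Bool) : Prop :=
  ∃ n, ∀ k < w.length, X (n + k) = w.getD k false

/-- `X` is disjunctive: every word occurs in `X` as a subword. -/
def Disjunctive (X : ℕ → Bool) : Prop := ∀ w : List Bool, Occurs w X

/-- The word `w` is a prefix of the sequence `X`. -/
def IsPrefixOfSeq (w : List Bool) (X : ℕ → Bool) : Prop :=
  ∀ k < w.length, X k = w.getD k false

/-- `[L]`: the set of sequences having some prefix in the language `L`. -/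
def cyl (L : Set (List Bool)) : Set (ℕ → Bool) := {X | ∃ w ∈ L, IsPrefixOfSeq w X}

/-- `I(X)`: the set of states visited infinitely often by the run of `X`. -/
def InfOcc {S : Type*} (f : S → Bool → S) (s₀ : S) (X : ℕ → Bool) : Set S :=
  {s | ∃ᶠ n in atTop, run f s₀ X n = s}

/-- `X` is accepted by the deterministic Büchi automaton `(S, f, s₀, F)`. -/
def BuchiAccepts {S : Type*} (f : S → Bool → S) (s₀ : S) (F : Set S) (X : ℕ → Bool) : Prop :=
  ∃ᶠ n in atTop, run f s₀ X n ∈ F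

/-- A language is regular if it is accepted by a DFA with finitely many states. -/
def Regular {A : Type} (L : Set (List A)) : Prop :=
  ∃ (S : Type) (_ : Fintype S) (f : S → A → S) (s₀ : S) (F : Set S),
    L = {w | act f s₀ w ∈ F}

/-- The convolution of two words. -/
def conv (x i : List Bool) : List (Option Bool × Option Bool) :=
  (List.range (max x.length i.length)).map (fun k => (x[k]?, i[k]?))

/-- `(I, U)` is an automatic family. -/
def IsAutomaticFamily (I : Set (List Bool)) (U : List Bool → Set (List Bool)) : Prop :=
  Regular I ∧ Regular {c | ∃ i ∈ I, ∃ x ∈ U i, c = conv x i}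

/-- `(I, U)` is an automatic randomness test (ART). -/
def IsART (I : Set (List Bool)) (U : List Bool → Set (List Bool)) : Prop :=
  IsAutomaticFamily I U ∧ ∀ ε : ENNReal, 0 < ε → ∃ i ∈ I, mu (cyl (U i)) ≤ ε

/-- `(I, U)` is a Martin-Löf automatic randomness test (MART). -/
def IsMART (I : Set (List Bool)) (U : List Bool → Set (List Bool)) : Prop :=
  IsAutomaticFamily I U ∧ I.Infinite ∧
    ∀ i ∈ I, mu (cyl (U i)) ≤ (2 : ENNReal) ^ (-(i.length : ℤ))

/-- The covering region `F(I, U)` of a test. -/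
def coverRegion (I : Set (List Bool)) (U : List Bool → Set (List Bool)) : Set (ℕ → Bool) :=
  ⋂ i ∈ I, cyl (U i)

/-!
If a word `w` does not occur in `X`, cut sequences into consecutive blocks of length `|w|` and
fall into a rejecting trap as soon as a block equals `w`. This automaton accepts `X`, and almost
every sequence has a block equal to `w`.

Conversely, let `X` be disjunctive and accepted, with `q ∈ F` visited infinitely often. Since
every word occurs in `X`, every state reachable from `q` can reach `q` back. From a set of states
closed under transitions, each of which can reach `q`, the run visits `q` infinitely often almost
surely; hence almost every sequence extending a prefix of `X` that leads to `q` is accepted, and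
these sequences have positive measure.
-/

noncomputable def bits (x : ℝ) : ℕ → Bool := fun n => decide (⌊x * 2 ^ (n + 1)⌋ % 2 = 1)

theorem measurable_bits : Measurable bits :=
  measurable_pi_lambda _ fun _ =>
    (Measurable.of_discrete (f := fun z : ℤ => decide (z % 2 = 1))).comp
      (Int.measurable_floor.comp (measurable_id.mul_const _))

theorem mu_apply {E : Set (ℕ → Bool)} (hE : MeasurableSet E) :
    mu E = volume (bits ⁻¹' E ∩ Set.Ico 0 1) := by
  change Measure.map bits _ E = _
  rw [Measure.map_apply measurable_bits hE, Measure.restrict_apply (measurable_bits hE)]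

instance : IsProbabilityMeasure mu :=
  ⟨by rw [mu_apply .univ, Set.preimage_univ, Set.univ_inter, Real.volume_Ico]; norm_num⟩

theorem bits_two_mul_sub (x : ℝ) (m k : ℕ) : bits (2 * x - m) k = bits x (k + 1) := by
  have h : (2 * x - m) * 2 ^ (k + 1) = x * 2 ^ (k + 1 + 1) - ((m * 2 * 2 ^ k : ℕ) : ℤ) := by
    push_cast; ring
  simp only [bits, h, Int.floor_sub_intCast, decide_eq_decide]
  have : (2 : ℤ) ∣ ((m * 2 * 2 ^ k : ℕ) : ℤ) := ⟨m * 2 ^ k, by push_cast; ring⟩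
  omega

theorem bits_zero_eq_and_mem_Ico_iff (x : ℝ) (b : Bool) :
    bits x 0 = b ∧ x ∈ Set.Ico 0 1 ↔ 2 * x - b.toNat ∈ Set.Ico 0 1 := by
  have hlt (z : ℤ) : 2 * x < z ↔ ⌊2 * x⌋ < z := Int.floor_lt.symm
  have hle (z : ℤ) : z ≤ 2 * x ↔ z ≤ ⌊2 * x⌋ := Int.le_floor.symm
  have h0 : 0 ≤ x ↔ 0 ≤ ⌊2 * x⌋ := by
    rw [← hle]; push_cast; constructor <;> intro <;> linarith
  have h1 : x < 1 ↔ ⌊2 * x⌋ < 2 := by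
    rw [← hlt]; push_cast; constructor <;> intro <;> linarith
  have h2 : 0 ≤ 2 * x - b.toNat ↔ b.toNat ≤ ⌊2 * x⌋ := by
    rw [sub_nonneg, ← hle]; push_cast; rfl
  have h3 : 2 * x - b.toNat < 1 ↔ ⌊2 * x⌋ < b.toNat + 1 := by
    rw [sub_lt_iff_lt_add', ← hlt]; push_cast; rfl
  simp only [bits, zero_add, pow_one, mul_comm x, Set.mem_Ico, h0, h1, h2, h3]
  cases b <;>
    simp only [decide_eq_false_iff_not, decide_eq_true_eq, Bool.toNat_false, Bool.toNat_true,
      Nat.cast_zero, Nat.cast_one] <;> omega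

theorem measurableSet_head_eq_and_tail_mem (b : Bool) {E : Set (ℕ → Bool)}
    (hE : MeasurableSet E) :
    MeasurableSet {Z : ℕ → Bool | Z 0 = b ∧ (fun k => Z (k + 1)) ∈ E} :=
  ((measurableSet_singleton b).preimage (measurable_pi_apply 0)).inter
    (hE.preimage (measurable_pi_lambda _ fun k => measurable_pi_apply (k + 1)))

theorem mu_head_eq_and_tail_mem (b : Bool) {E : Set (ℕ → Bool)} (hE : MeasurableSet E) :
    mu {Z | Z 0 = b ∧ (fun k => Z (k + 1)) ∈ E} = 2⁻¹ * mu E := by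
  -- on binary expansions, dropping the first digit `b` is the affine map `x ↦ 2 * x - b`
  have hpre : bits ⁻¹' {Z | Z 0 = b ∧ (fun k => Z (k + 1)) ∈ E} ∩ Set.Ico 0 1 =
      (2 * ·) ⁻¹' ((· + -(b.toNat : ℝ)) ⁻¹' (bits ⁻¹' E ∩ Set.Ico 0 1)) := by
    ext x
    have htail : (fun k => bits x (k + 1)) = bits (2 * x - b.toNat) :=
      funext fun k => (bits_two_mul_sub x _ k).symm
    simp only [Set.mem_preimage, Set.mem_inter_iff, Set.mem_ofPred_eq, htail, ← sub_eq_add_neg,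
      ← bits_zero_eq_and_mem_Ico_iff]
    tauto
  rw [mu_apply (measurableSet_head_eq_and_tail_mem b hE), mu_apply hE, hpre,
    Real.volume_preimage_mul_left two_ne_zero, measure_preimage_add_right, abs_of_pos (by norm_num),
    ENNReal.ofReal_inv_of_pos two_pos, ENNReal.ofReal_ofNat]

theorem mu_agree_and_shift_mem (X : ℕ → Bool) (n : ℕ) {E : Set (ℕ → Bool)}
    (hE : MeasurableSet E) :
    mu {Y | (∀ k < n, Y k = X k) ∧ (fun k => Y (n + k)) ∈ E} = 2⁻¹ ^ n * mu E := by
  induction n generalizing E with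
  | zero =>
    simp only [not_lt_zero, IsEmpty.forall_iff, implies_true, zero_add, true_and, pow_zero, one_mul]
    rfl
  | succ n ih =>
    have hset : {Y : ℕ → Bool | (∀ k < n + 1, Y k = X k) ∧ (fun k => Y (n + 1 + k)) ∈ E} =
        {Y | (∀ k < n, Y k = X k) ∧
          (fun k => Y (n + k)) ∈ {Z | Z 0 = X n ∧ (fun k => Z (k + 1)) ∈ E}} := by
      ext Y
      simp only [Set.mem_ofPred_eq, Nat.forall_lt_succ_right, add_zero, and_assoc,
        Nat.add_right_comm n 1, Nat.add_assoc n _ 1]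
    rw [hset, ih (measurableSet_head_eq_and_tail_mem _ hE), mu_head_eq_and_tail_mem _ hE,
      pow_succ, mul_assoc]

section Run

variable {S : Type*} (f : S → Bool → S)

theorem act_append (s : S) (u v : List Bool) : act f s (u ++ v) = act f (act f s u) v :=
  List.foldl_append

theorem act_mem {D : Set S} (hD : ∀ s ∈ D, ∀ b, f s b ∈ D) {s : S} (hs : s ∈ D)
    (l : List Bool) : act f s l ∈ D := by
  induction l generalizing s with
  | nil => exact hs
  | cons b l ih => exact ih (hD s hs b)

theorem run_succ' (s : S) (Z : ℕ → Bool) (t : ℕ) :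
    run f s Z (t + 1) = run f (f s (Z 0)) (fun k => Z (k + 1)) t := by
  induction t with
  | zero => rfl
  | succ t ih => exact congrArg (f · (Z (t + 1))) ih

theorem run_add (s : S) (Z : ℕ → Bool) (a t : ℕ) :
    run f s Z (a + t) = run f (run f s Z a) (fun k => Z (a + k)) t := by
  induction t with
  | zero => rfl
  | succ t ih => exact congrArg (f · (Z (a + t))) ih

theorem run_eq_act (s : S) (Z : ℕ → Bool) (t : ℕ) :
    run f s Z t = act f s (List.ofFn fun k : Fin t => Z k) := by
  induction t with
  | zero => rfl
  | succ t ih =>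
    rw [List.ofFn_succ', List.concat_eq_append, act_append]
    simp only [Fin.val_castSucc, Fin.val_last, ← ih]
    rfl

theorem run_congr (s : S) {Y Z : ℕ → Bool} {t : ℕ} (h : ∀ k < t, Y k = Z k) :
    run f s Y t = run f s Z t := by
  simp only [run_eq_act, fun k : Fin t => h k k.2]

theorem measurableSet_run_eq (s q : S) (t : ℕ) :
    MeasurableSet {Z : ℕ → Bool | run f s Z t = q} := by
  induction t generalizing s with
  | zero => exact .const (s = q)
  | succ t ih =>
    have hset : {Z : ℕ → Bool | run f s Z (t + 1) = q} =
        ⋃ b, {Z | Z 0 = b ∧ (fun k => Z (k + 1)) ∈ {Z | run f (f s b) Z t = q}} := by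
      ext Z; simp [run_succ']
    rw [hset]
    exact .iUnion fun b => measurableSet_head_eq_and_tail_mem b (ih _)

theorem run_add_eq_act (s : S) (Z : ℕ → Bool) (a t : ℕ) :
    run f s Z (a + t) = act f (run f s Z a) (List.ofFn fun k : Fin t => Z (a + k)) := by
  rw [run_add, run_eq_act]

theorem run_eq_of_absorbing {q : S} (hq : ∀ b, f q b = q) (Z : ℕ → Bool) (t : ℕ) :
    run f q Z t = q := by
  induction t with
  | zero => rfl
  | succ t ih => exact (congrArg (f · (Z t)) ih).trans (hq _)

end Run

theorem Reach.trans {S : Type*} {f : S → Bool → S} {s t u : S} :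
    Reach f s t → Reach f t u → Reach f s u := by
  rintro ⟨v, rfl⟩ ⟨w, rfl⟩
  exact ⟨v ++ w, act_append f s v w⟩

theorem occurs_iff {w : List Bool} {X : ℕ → Bool} :
    Occurs w X ↔ ∃ a, (List.ofFn fun k : Fin w.length => X (a + k)) = w := by
  refine exists_congr fun a => ⟨fun h => List.ext_getElem (by simp) fun k hk hk' => ?_,
    fun h k hk => ?_⟩
  · simpa [List.getElem?_eq_getElem hk'] using h k hk'
  · rw [List.getD_eq_getElem _ _ hk, List.getElem_of_eq h.symm (by simpa using hk)]
    simp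

section Avoid

variable {S : Type*} (f : S → Bool → S) (q : S)

def avoidAfter (s : S) (d : ℕ) : Set (ℕ → Bool) := {Z | ∀ t, d ≤ t → run f s Z t ≠ q}

theorem measurableSet_avoidAfter (s : S) (d : ℕ) : MeasurableSet (avoidAfter f q s d) := by
  simp only [avoidAfter, Set.ofPred_forall]
  exact .iInter fun t => .iInter fun _ => (measurableSet_run_eq f s q t).compl

theorem avoidAfter_mono (s : S) : Monotone (avoidAfter f q s) :=
  fun _ _ hde _ hZ t ht => hZ t (hde.trans ht)

theorem avoidAfter_self : avoidAfter f q q 0 = ∅ :=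
  Set.eq_empty_of_forall_notMem fun _ hZ => hZ 0 le_rfl rfl

theorem mu_avoidAfter_succ_le (s : S) (d : ℕ) :
    mu (avoidAfter f q s (d + 1)) ≤ ∑ b, 2⁻¹ * mu (avoidAfter f q (f s b) d) := by
  have hsub : avoidAfter f q s (d + 1) ⊆
      ⋃ b, {Z | Z 0 = b ∧ (fun k => Z (k + 1)) ∈ avoidAfter f q (f s b) d} := by
    intro Z hZ
    refine Set.mem_iUnion.2 ⟨Z 0, rfl, fun t ht => ?_⟩
    rw [← run_succ']
    exact hZ (t + 1) (by omega)
  calc mu (avoidAfter f q s (d + 1))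
      ≤ ∑ b, mu {Z | Z 0 = b ∧ (fun k => Z (k + 1)) ∈ avoidAfter f q (f s b) d} :=
        (measure_mono hsub).trans (measure_iUnion_fintype_le _ _)
    _ = ∑ b, 2⁻¹ * mu (avoidAfter f q (f s b) d) := by
        simp only [mu_head_eq_and_tail_mem _ (measurableSet_avoidAfter f q _ d)]

/-- Let `a` be the largest probability, over states of `D`, of never visiting `q`. A path of length
`n` to `q` shows that each of these probabilities is at most `a - 2⁻¹ ^ n * a`; at a maximiser
this forces `a = 0`. -/
theorem mu_avoidAfter_zero_eq_zero [Finite S] {D : Set S} (hD : ∀ s ∈ D, ∀ b, f s b ∈ D)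
    (hq : ∀ s ∈ D, Reach f s q) {s : S} (hs : s ∈ D) :
    mu (avoidAfter f q s 0) = 0 := by
  obtain ⟨s₁, hs₁, hmax⟩ := Set.exists_max_image D (fun s => mu (avoidAfter f q s 0))
    D.toFinite ⟨s, hs⟩
  set a := mu (avoidAfter f q s₁ 0)
  have key : ∀ (p : List Bool) (s : S), s ∈ D → act f s p = q →
      mu (avoidAfter f q s 0) + 2⁻¹ ^ p.length * a ≤ a := by
    intro p
    induction p with
    | nil =>
      rintro s - rfl
      simp [act, avoidAfter_self]
    | cons b p ih =>
      intro s hs hp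
      have hb := ih (f s b) (hD s hs b) hp
      have hnb := hmax _ (hD s hs !b)
      have hstep : mu (avoidAfter f q s 0) ≤
          2⁻¹ * mu (avoidAfter f q (f s b) 0) + 2⁻¹ * mu (avoidAfter f q (f s !b) 0) := by
        refine (measure_mono (avoidAfter_mono f q s (Nat.zero_le 1))).trans
          ((mu_avoidAfter_succ_le f q s 0).trans_eq ?_)
        cases b <;> simp [add_comm]
      calc mu (avoidAfter f q s 0) + 2⁻¹ ^ (b :: p).length * a
          ≤ 2⁻¹ * mu (avoidAfter f q (f s b) 0) + 2⁻¹ * a +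
              2⁻¹ * (2⁻¹ ^ p.length * a) := by
            rw [List.length_cons, pow_succ', mul_assoc]
            exact add_le_add (hstep.trans (by gcongr)) le_rfl
        _ = 2⁻¹ * (mu (avoidAfter f q (f s b) 0) + 2⁻¹ ^ p.length * a) + 2⁻¹ * a := by ring
        _ ≤ 2⁻¹ * a + 2⁻¹ * a := by gcongr
        _ = a := by
          rw [← two_mul, ← mul_assoc, ENNReal.mul_inv_cancel two_ne_zero (by simp), one_mul]
  obtain ⟨p, hp⟩ := hq s₁ hs₁
  have ha : a + 2⁻¹ ^ p.length * a ≤ a + 0 := (key p s₁ hs₁ hp).trans_eq (add_zero a).symm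
  rw [ENNReal.add_le_add_iff_left (measure_ne_top _ _), nonpos_iff_eq_zero, mul_eq_zero] at ha
  exact le_antisymm ((hmax s hs).trans
    (ha.resolve_left (pow_ne_zero _ (ENNReal.inv_ne_zero.2 ENNReal.ofNat_ne_top))).le) bot_le

theorem mu_avoidAfter_eq_zero [Finite S] {D : Set S} (hD : ∀ s ∈ D, ∀ b, f s b ∈ D)
    (hq : ∀ s ∈ D, Reach f s q) (d : ℕ) : ∀ s ∈ D, mu (avoidAfter f q s d) = 0 := by
  induction d with
  | zero => exact fun s hs => mu_avoidAfter_zero_eq_zero f q hD hq hs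
  | succ d ih =>
    intro s hs
    refine le_antisymm ((mu_avoidAfter_succ_le f q s d).trans ?_) bot_le
    simp [ih _ (hD s hs _)]

theorem ae_frequently_run_eq [Finite S] {D : Set S} (hD : ∀ s ∈ D, ∀ b, f s b ∈ D)
    (hq : ∀ s ∈ D, Reach f s q) {s : S} (hs : s ∈ D) :
    ∀ᵐ Z ∂mu, ∃ᶠ t in atTop, run f s Z t = q := by
  refine ae_iff.2 (measure_mono_null (fun Z hZ => ?_)
    (measure_iUnion_null fun d => mu_avoidAfter_eq_zero f q hD hq d s hs))
  obtain ⟨d, hd⟩ := eventually_atTop.1 (not_frequently.1 hZ)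
  exact Set.mem_iUnion.2 ⟨d, hd⟩

end Avoid

section Buchi

variable {S : Type*} {f : S → Bool → S} {s₀ : S} {F : Set S}

theorem mu_buchiAccepts_eq_zero_of_trap [Finite S] {q : S} (hqq : ∀ b, f q b = q)
    (hq : ∀ s, Reach f s q) (hqF : q ∉ F) : mu {Y | BuchiAccepts f s₀ F Y} = 0 := by
  refine measure_mono_null (t := {Y | ¬ ∃ᶠ t in atTop, run f s₀ Y t = q})
    (fun Y hY hYq => ?_) (ae_iff.1 (ae_frequently_run_eq f q (D := Set.univ) (fun _ _ _ => trivial)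
      (fun s _ => hq s) (Set.mem_univ s₀)))
  obtain ⟨a, ha⟩ := hYq.exists
  refine hY (eventually_atTop.2 ⟨a, fun t hat hF => hqF ?_⟩)
  rwa [← Nat.add_sub_cancel' hat, run_add, ha, run_eq_of_absorbing f hqq] at hF

theorem exists_mem_infOcc_of_buchiAccepts [Finite S] {X : ℕ → Bool}
    (h : BuchiAccepts f s₀ F X) : ∃ q ∈ F, q ∈ InfOcc f s₀ X := by
  have h' : ∃ᶠ n in atTop, ∃ q, run f s₀ X n = q ∧ q ∈ F :=
    h.mono fun _ hF => ⟨_, rfl, hF⟩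
  obtain ⟨q, hq⟩ := frequently_exists.1 h'
  obtain ⟨_, rfl, hF⟩ := hq.exists
  exact ⟨_, hF, hq.mono fun _ => And.left⟩

theorem reach_of_mem_infOcc {X : ℕ → Bool} {q : S} (hq : q ∈ InfOcc f s₀ X) (a : ℕ) :
    Reach f (run f s₀ X a) q := by
  obtain ⟨t, hat, rfl⟩ := frequently_atTop.1 hq a
  rw [← Nat.add_sub_cancel' hat, run_add_eq_act]
  exact ⟨_, rfl⟩

theorem exists_forall_act_mem [Finite S] {D : Set S} (hD : ∀ s ∈ D, ∀ b, f s b ∈ D)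
    (hreach : ∀ s, ∃ l, act f s l ∈ D) : ∃ l, ∀ s, act f s l ∈ D := by
  classical
  have := Fintype.ofFinite S
  suffices ∀ A : Finset S, ∃ l, ∀ s ∈ A, act f s l ∈ D by
    simpa using this Finset.univ
  intro A
  induction A using Finset.induction_on with
  | empty => exact ⟨[], by simp⟩
  | insert s A _ ih =>
    obtain ⟨l, hl⟩ := ih
    obtain ⟨l', hl'⟩ := hreach (act f s l)
    refine ⟨l ++ l', fun t ht => ?_⟩
    rw [act_append]
    rcases Finset.mem_insert.1 ht with rfl | ht
    · exact hl'
    · exact act_mem f hD (hl t ht) l'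

theorem reach_of_reach_of_mem_infOcc [Finite S] {X : ℕ → Bool} (hX : Disjunctive X) {q t : S}
    (hq : q ∈ InfOcc f s₀ X) (hqt : Reach f q t) : Reach f t q := by
  by_contra htq
  -- then some word drives every state to where `q` is unreachable, yet that word occurs in `X`
  have hD : ∀ s ∈ {s | ¬ Reach f s q}, ∀ b, f s b ∈ {s | ¬ Reach f s q} :=
    fun s hs b hbq => hs (Reach.trans ⟨[b], rfl⟩ hbq)
  obtain ⟨l, hl⟩ := exists_forall_act_mem hD fun s => by
    by_cases hs : Reach f s q
    · obtain ⟨l, hl⟩ := hs.trans hqt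
      exact ⟨l, hl ▸ htq⟩
    · exact ⟨[], hs⟩
  obtain ⟨a, ha⟩ := occurs_iff.1 (hX l)
  apply hl (run f s₀ X a)
  rw [← ha, ← run_add_eq_act]
  exact reach_of_mem_infOcc hq _

theorem measurableSet_frequently_run_eq (s q : S) :
    MeasurableSet {Z : ℕ → Bool | ∃ᶠ t in atTop, run f s Z t = q} := by
  simp only [frequently_atTop, Set.ofPred_forall, Set.ofPred_exists]
  exact .iInter fun a => .iUnion fun t =>
    (MeasurableSet.const (a ≤ t)).inter (measurableSet_run_eq f s q t)

theorem mu_buchiAccepts_ne_zero [Finite S] {X : ℕ → Bool} (hX : Disjunctive X)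
    (hacc : BuchiAccepts f s₀ F X) : mu {Y | BuchiAccepts f s₀ F Y} ≠ 0 := by
  obtain ⟨q, hqF, hq⟩ := exists_mem_infOcc_of_buchiAccepts hacc
  obtain ⟨N, hN⟩ := hq.exists
  set V := {Z : ℕ → Bool | ∃ᶠ t in atTop, run f q Z t = q}
  have hV : mu V = 1 := (prob_compl_eq_zero_iff (measurableSet_frequently_run_eq q q)).1 <|
    ae_iff.1 <| ae_frequently_run_eq f q (D := {t | Reach f q t})
      (fun _ ⟨l, hl⟩ b => ⟨l ++ [b], by rw [act_append, hl]; rfl⟩)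
      (fun _ => reach_of_reach_of_mem_infOcc hX hq) ⟨[], rfl⟩
  have hsub : {Y | (∀ k < N, Y k = X k) ∧ (fun k => Y (N + k)) ∈ V} ⊆
      {Y | BuchiAccepts f s₀ F Y} := by
    rintro Y ⟨hYX, hYV⟩
    refine frequently_atTop.2 fun a => ?_
    obtain ⟨t, hat, ht⟩ := frequently_atTop.1 hYV a
    refine ⟨N + t, by omega, ?_⟩
    rwa [run_add, run_congr f s₀ hYX, hN, ht]
  refine ne_bot_of_le_ne_bot ?_ (measure_mono hsub)
  rw [mu_agree_and_shift_mem X N (measurableSet_frequently_run_eq q q), hV, mul_one]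
  exact pow_ne_zero _ (ENNReal.inv_ne_zero.2 ENNReal.ofNat_ne_top)

end Buchi

section BlockAutomaton

variable (w : List Bool) (hw : 0 < w.length)

/-- Reads the input in consecutive blocks of length `w.length`: in state `some (i, ok)` the next
letter is at position `i` of its block and `ok` records whether the block agrees with `w` so far;
the trap `none` is entered when a whole block equals `w`. -/
def blockStep : Option (Fin w.length × Bool) → Bool → Option (Fin w.length × Bool)
  | none, _ => none
  | some (i, ok), b =>
    if h : (i : ℕ) + 1 = w.length then
      (if ok && b == w[i] then none else some (⟨0, hw⟩, true))
    else some (⟨i + 1, by omega⟩, ok && b == w[i])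

theorem act_blockStep (v : List Bool) (i : Fin w.length) (ok : Bool)
    (hv : i + v.length = w.length) :
    act (blockStep w hw) (some (i, ok)) v =
      if ok ∧ v = w.drop i then none else some (⟨0, hw⟩, true) := by
  induction v generalizing i ok with
  | nil => simp only [List.length_nil, add_zero] at hv; omega
  | cons b v ih =>
    rw [List.length_cons] at hv
    by_cases hi : (i : ℕ) + 1 = w.length
    · obtain rfl : v = [] := List.eq_nil_of_length_eq_zero (by omega)
      simp [act, blockStep, hi, List.drop_eq_getElem_cons i.2]
    · rw [act, List.foldl_cons, ← act]
      simp only [blockStep, hi, ↓reduceDIte, Fin.getElem_fin,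
        ih ⟨i + 1, by omega⟩ _ (by simp only; omega), Bool.and_eq_true, beq_iff_eq, and_assoc]
      rw [List.drop_eq_getElem_cons i.2]
      simp only [List.cons.injEq]

theorem act_blockStep_none (l : List Bool) : act (blockStep w hw) none l = none := by
  induction l with
  | nil => rfl
  | cons b l ih => exact ih

theorem reach_blockStep_none (s : Option (Fin w.length × Bool)) :
    Reach (blockStep w hw) s none := by
  obtain _ | ⟨i, ok⟩ := s
  · exact ⟨[], rfl⟩
  refine ⟨w.drop i ++ w, ?_⟩
  rw [act_append, act_blockStep w hw _ i ok (by simp)]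
  split_ifs
  · exact act_blockStep_none w hw w
  · simpa using act_blockStep w hw w ⟨0, hw⟩ true (by simp)

theorem run_blockStep_mul {X : ℕ → Bool} (hX : ¬ Occurs w X) (j : ℕ) :
    run (blockStep w hw) (some (⟨0, hw⟩, true)) X (j * w.length) =
      some (⟨0, hw⟩, true) := by
  induction j with
  | zero => rw [zero_mul]; rfl
  | succ j ih =>
    rw [Nat.succ_mul, run_add_eq_act, ih, act_blockStep w hw _ _ _ (by simp)]
    simp only [List.drop_zero, true_and, ite_eq_right_iff, reduceCtorEq]
    exact fun h => hX (occurs_iff.2 ⟨_, h⟩)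

end BlockAutomaton

theorem exists_buchi_of_not_disjunctive {X : ℕ → Bool} (hX : ¬ Disjunctive X) :
    ∃ (S : Type) (_ : Fintype S) (f : S → Bool → S) (s₀ : S) (F : Set S),
      mu {Y : ℕ → Bool | BuchiAccepts f s₀ F Y} = 0 ∧ BuchiAccepts f s₀ F X := by
  obtain ⟨w, hwX⟩ := not_forall.1 hX
  have hw : 0 < w.length := List.length_pos_iff.2 fun h => hwX ⟨0, by simp [h]⟩
  refine ⟨_, inferInstance, blockStep w hw, some (⟨0, hw⟩, true), {s | s ≠ none},
    mu_buchiAccepts_eq_zero_of_trap (fun _ => rfl) (reach_blockStep_none w hw) (by simp),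
    frequently_atTop.2 fun a => ⟨a * w.length, Nat.le_mul_of_pos_right a hw, ?_⟩⟩
  simp [run_blockStep_mul w hw hwX]

/-- `X` is accepted by some deterministic Büchi automaton of measure zero
iff `X` is not disjunctive. -/
theorem stmt8 (X : ℕ → Bool) :
    (∃ (S : Type) (_ : Fintype S) (f : S → Bool → S) (s₀ : S) (F : Set S),
        mu {Y : ℕ → Bool | BuchiAccepts f s₀ F Y} = 0 ∧ BuchiAccepts f s₀ F X) ↔
      ¬ Disjunctive X := by
  refine ⟨?_, exists_buchi_of_not_disjunctive⟩
  rintro ⟨S, _, f, s₀, F, hmu, hX⟩ hdisj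
  exact mu_buchiAccepts_ne_zero hdisj hX hmu
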